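/- arXiv:0908.3267 — 2 statements merged into one kernel-verified Lean document; each statement's English description precedes it below -/
import Mathlib

section
/- Let A be a Hermitian commutative unital complex *-algebra, let H be a complex Hilbert space, let D be a dense ℂ-subspace of H, and let π be a representation of A on D. Let c ∈ A and write c = a + i·b with a := (c + star c)/2 and b := (c - star c)/(2i), which are selfadjoint. Then T_a and T_b are essentially self-adjoint, T_c is closable, and the closure of T_c equals the sum of the closure of T_a and i times the closure of T_b (the domain of the closure of T_c is the intersection of the domains of the closures of T_a and T_b, and on this intersection (closure T_c) x = (closure T_a) x + i • (closure T_b) x). -/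
/-! For selfadjoint `s`, the operator `T_s = repPMap π s` is symmetric, and since `A` is
Hermitian, `μ - s` is invertible in `A` for every non-real `μ`. The inverse acts on `D` with norm
at most `|Im μ|⁻¹`, so it extends to a bounded operator `R_μ` on `H`, the resolvent of the
closure of `T_s`. In particular `μ - closure T_s` is onto for `μ = ±i`, and a densely defined
symmetric operator with this property is self-adjoint.

For `c = a + i b`, commutativity makes `⟪T_a u, T_b u⟫` real, so
`‖T_c u‖² = ‖T_a u‖² + ‖T_b u‖²` on `D`: a graph limit for `T_c` is a graph limit for `T_a` and
for `T_b` along the same sequence. Conversely, the contractions `iν R_{iν}` built from `b` map `D`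
into `D`, commute with `T_a`, and converge strongly to `1` as `ν → ∞`; applied to a point of
`dom (closure T_a) ∩ dom (closure T_b)` they give points of `dom (closure T_c)` that converge in
the graph norm of `T_c`. -/

open scoped InnerProductSpace
open Filter Topology

theorem cauchySeq_comp_of_norm_le {M E F ι : Type*} [AddCommGroup M] [SeminormedAddCommGroup E]
    [SeminormedAddCommGroup F] [Nonempty ι] [SemilatticeSup ι] (f : M →+ E) (g : M →+ F)
    (hfg : ∀ x, ‖f x‖ ≤ ‖g x‖) {u : ι → M} (hu : CauchySeq (g ∘ u)) : CauchySeq (f ∘ u) := by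
  rw [Metric.cauchySeq_iff] at hu ⊢
  intro ε hε
  obtain ⟨N, hN⟩ := hu ε hε
  refine ⟨N, fun m hm n hn => ?_⟩
  calc dist (f (u m)) (f (u n)) = ‖f (u m - u n)‖ := by rw [map_sub, dist_eq_norm]
    _ ≤ ‖g (u m - u n)‖ := hfg _
    _ = dist (g (u m)) (g (u n)) := by rw [map_sub, dist_eq_norm]
    _ < ε := hN m hm n hn

namespace LinearPMap

section Closure

variable {R E F : Type*} [CommRing R] [TopologicalSpace R]
  [NormedAddCommGroup E] [Module R E] [ContinuousSMul R E]
  [NormedAddCommGroup F] [Module R F] [ContinuousSMul R F]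

theorem IsClosable.mem_closure_graph_iff {f : E →ₗ.[R] F} (hf : f.IsClosable) {x : E} {y : F} :
    (x, y) ∈ f.closure.graph ↔ ∃ u : ℕ → f.domain,
      Tendsto (fun n => (u n : E)) atTop (𝓝 x) ∧ Tendsto (fun n => f (u n)) atTop (𝓝 y) := by
  rw [← hf.graph_closure_eq_closure_graph, ← SetLike.mem_coe, Submodule.topologicalClosure_coe,
    mem_closure_iff_seq_limit]
  constructor
  · rintro ⟨p, hp, hlim⟩
    choose u hu using fun n => (f.mem_graph_iff' (x := p n)).1 (hp n)
    exact ⟨u, ((continuous_fst.tendsto _).comp hlim).congr fun n => by simp [← hu n],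
      ((continuous_snd.tendsto _).comp hlim).congr fun n => by simp [← hu n]⟩
  · rintro ⟨u, hx, hy⟩
    exact ⟨fun n => ((u n : E), f (u n)), fun n => f.mem_graph (u n), hx.prodMk_nhds hy⟩

end Closure

section Adjoint

variable {𝕜 E F : Type*} [RCLike 𝕜]
  [NormedAddCommGroup E] [InnerProductSpace 𝕜 E] [NormedAddCommGroup F] [InnerProductSpace 𝕜 F]

theorem IsFormalAdjoint.closure_left {T : E →ₗ.[𝕜] F} {S : F →ₗ.[𝕜] E}
    (h : T.IsFormalAdjoint S) (hT : T.IsClosable) : T.closure.IsFormalAdjoint S := by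
  intro x y
  have hgraph : T.closure.graph ≤ {p : E × F | ⟪p.2, (y : F)⟫_𝕜 = ⟪p.1, S y⟫_𝕜} := by
    rw [← hT.graph_closure_eq_closure_graph, Submodule.topologicalClosure_coe]
    refine closure_minimal (fun p hp => ?_) (isClosed_eq (by fun_prop) (by fun_prop))
    obtain ⟨z, rfl⟩ := (T.mem_graph_iff' (x := p)).1 hp
    exact h z y
  exact hgraph (T.closure.mem_graph x)

theorem IsFormalAdjoint.closure {T : E →ₗ.[𝕜] F} {S : F →ₗ.[𝕜] E}
    (h : T.IsFormalAdjoint S) (hT : T.IsClosable) (hS : S.IsClosable) :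
    T.closure.IsFormalAdjoint S.closure :=
  ((h.closure_left hT).symm.closure_left hS).symm

theorem IsFormalAdjoint.isClosable [CompleteSpace F] {T : E →ₗ.[𝕜] F} {S : F →ₗ.[𝕜] E}
    (h : S.IsFormalAdjoint T) (hS : Dense (S.domain : Set F)) : T.IsClosable :=
  (adjoint_isClosed hS).isClosable.leIsClosable (h.le_adjoint hS)

end Adjoint

section Symmetric

variable {H : Type*} [NormedAddCommGroup H] [InnerProductSpace ℂ H] {T : H →ₗ.[ℂ] H}

theorem IsFormalAdjoint.im_inner_self_eq_zero (hT : T.IsFormalAdjoint T) (x : T.domain) :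
    (⟪T x, (x : H)⟫_ℂ).im = 0 := by
  rw [← Complex.conj_eq_iff_im, inner_conj_symm, hT x x]

theorem IsFormalAdjoint.abs_im_mul_norm_le (hT : T.IsFormalAdjoint T) (μ : ℂ) (x : T.domain) :
    |μ.im| * ‖(x : H)‖ ≤ ‖μ • (x : H) - T x‖ := by
  have him : (⟪μ • (x : H) - T x, (x : H)⟫_ℂ).im = -μ.im * ‖(x : H)‖ ^ 2 := by
    rw [inner_sub_left, inner_smul_left, inner_self_eq_norm_sq_to_K, Complex.sub_im,
      hT.im_inner_self_eq_zero]
    simp [← Complex.ofReal_pow]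
  rcases (norm_nonneg (x : H)).eq_or_lt with hx | hx
  · simp [← hx]
  refine le_of_mul_le_mul_right ?_ hx
  calc |μ.im| * ‖(x : H)‖ * ‖(x : H)‖ = |(⟪μ • (x : H) - T x, (x : H)⟫_ℂ).im| := by
        rw [him, abs_mul, abs_neg, abs_pow, abs_norm]; ring
    _ ≤ ‖⟪μ • (x : H) - T x, (x : H)⟫_ℂ‖ := Complex.abs_im_le_norm _
    _ ≤ ‖μ • (x : H) - T x‖ * ‖(x : H)‖ := norm_inner_le_norm _ _

theorem isSelfAdjoint_of_surjective [CompleteSpace H] (hdense : Dense (T.domain : Set H))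
    (hT : T.IsFormalAdjoint T)
    (hI : ∀ w, ∃ x : T.domain, Complex.I • (x : H) - T x = w)
    (hnegI : ∀ w, ∃ x : T.domain, -Complex.I • (x : H) - T x = w) : IsSelfAdjoint T := by
  refine le_antisymm (le_of_le_graph fun p hp => ?_) (hT.le_adjoint hdense)
  obtain ⟨y, rfl⟩ := (T.adjoint.mem_graph_iff' (x := p)).1 hp
  obtain ⟨x, hx⟩ := hI (Complex.I • (y : H) - T.adjoint y)
  have hTx : T x = Complex.I • (x : H) - Complex.I • (y : H) + T.adjoint y := by
    rw [sub_add, ← hx, sub_sub_cancel]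
  -- `y - x ∈ ker (T† - i)`, which is orthogonal to `range (-i - T) = H`.
  have hperp : ∀ q, ⟪(y : H) - x, q⟫_ℂ = 0 := by
    intro q
    obtain ⟨z, rfl⟩ := hnegI q
    rw [inner_sub_left, inner_sub_right, inner_sub_right, ← adjoint_isFormalAdjoint hdense y z,
      ← hT x z, hTx]
    simp only [inner_add_left, inner_sub_left, inner_smul_left, inner_smul_right,
      Complex.conj_I]
    ring
  have hxy : (x : H) = y := (sub_eq_zero.1 (inner_self_eq_zero.1 (hperp _))).symm
  exact (T.mem_graph_iff).2 ⟨x, hxy, by rw [hTx, hxy, sub_self, zero_add]⟩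

end Symmetric

end LinearPMap

section Representation

variable {A : Type*} [Ring A] [Algebra ℂ A]
  {H : Type*} [NormedAddCommGroup H] [InnerProductSpace ℂ H] {D : Submodule ℂ H}

def repPMap (π : A →ₐ[ℂ] (D →ₗ[ℂ] D)) (s : A) : H →ₗ.[ℂ] H := ⟨D, D.subtype.comp (π s)⟩

variable {π : A →ₐ[ℂ] (D →ₗ[ℂ] D)}

theorem repPMap_apply (s : A) (u : D) : repPMap π s u = ((π s u : D) : H) := rfl

theorem dense_domain_closure_repPMap (hD : Dense (D : Set H)) (s : A) :
    Dense ((repPMap π s).closure.domain : Set H) :=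
  hD.mono (repPMap π s).le_closure.1

theorem rep_apply_of_eq_add_I_smul {a b c : A} (hc : c = a + Complex.I • b) (u : D) :
    ((π c u : D) : H) = π a u + Complex.I • ((π b u : D) : H) := by
  rw [hc, map_add, map_smul]
  rfl

theorem rep_algebraMap_sub_apply (s : A) (μ : ℂ) (u : D) :
    ((π (algebraMap ℂ A μ - s) u : D) : H) = μ • (u : H) - π s u := by
  simp [Algebra.algebraMap_eq_smul_one]

theorem rep_apply_rep_resolvent_apply {s : A} {μ : ℂ} (hμ : μ ∉ spectrum ℂ s) (u : D) :
    ((π s (π (resolvent s μ) u) : D) : H) = μ • ((π (resolvent s μ) u : D) : H) - u := by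
  have hr : (algebraMap ℂ A μ - s) * resolvent s μ = 1 :=
    Ring.mul_inverse_cancel _ (spectrum.notMem_iff.1 hμ)
  have h := rep_algebraMap_sub_apply (π := π) s μ (π (resolvent s μ) u)
  rw [← Module.End.mul_apply, ← map_mul, hr, map_one, Module.End.one_apply] at h
  rw [h, sub_sub_cancel]

theorem rep_resolvent_apply_rep_sub_apply {s : A} {μ : ℂ} (hμ : μ ∉ spectrum ℂ s) (u : D) :
    π (resolvent s μ) (π (algebraMap ℂ A μ - s) u) = u := by
  have hr : resolvent s μ * (algebraMap ℂ A μ - s) = 1 :=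
    Ring.inverse_mul_cancel _ (spectrum.notMem_iff.1 hμ)
  rw [← Module.End.mul_apply, ← map_mul, hr, map_one, Module.End.one_apply]

section Extension

variable [CompleteSpace H]

open Classical in
/-- The continuous extension of `π (resolvent s μ)` from `D` to `H`; it is `0` (a junk value)
when `π (resolvent s μ)` is unbounded. -/
noncomputable def repResolvent (π : A →ₐ[ℂ] (D →ₗ[ℂ] D)) (s : A) (μ : ℂ) : H →L[ℂ] H :=
  if h : ∃ C, ∀ u : D, ‖((π (resolvent s μ) u : D) : H)‖ ≤ C * ‖(u : H)‖ then
    (LinearMap.mkContinuousOfExistsBound (D.subtype ∘ₗ π (resolvent s μ)) h).extend D.subtypeL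
  else 0

theorem repResolvent_apply_of_bound (hD : Dense (D : Set H)) {s : A} {μ : ℂ} {C : ℝ}
    (hC : ∀ u : D, ‖((π (resolvent s μ) u : D) : H)‖ ≤ C * ‖(u : H)‖) (u : D) :
    repResolvent π s μ u = π (resolvent s μ) u := by
  rw [repResolvent, dif_pos ⟨C, hC⟩]
  exact ContinuousLinearMap.extend_eq _ hD.denseRange_val
    isUniformEmbedding_subtype_val.isUniformInducing u

theorem norm_repResolvent_le_of_bound (hD : Dense (D : Set H)) {s : A} {μ : ℂ} {C : ℝ}
    (hC : ∀ u : D, ‖((π (resolvent s μ) u : D) : H)‖ ≤ C * ‖(u : H)‖) (x : H) :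
    ‖repResolvent π s μ x‖ ≤ C * ‖x‖ := by
  refine hD.induction (P := fun x => ‖repResolvent π s μ x‖ ≤ C * ‖x‖) (fun u hu => ?_)
    (isClosed_le (by fun_prop) (by fun_prop)) x
  simpa only [repResolvent_apply_of_bound hD hC ⟨u, hu⟩] using hC ⟨u, hu⟩

end Extension

variable [StarRing A]

def IsStarRep (π : A →ₐ[ℂ] (D →ₗ[ℂ] D)) : Prop :=
  ∀ (d : A) (x y : D), ⟪((π d x : D) : H), (y : H)⟫_ℂ = ⟪(x : H), ((π (star d) y : D) : H)⟫_ℂ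

theorem IsStarRep.isFormalAdjoint (hπ : IsStarRep π) (s : A) :
    (repPMap π s).IsFormalAdjoint (repPMap π (star s)) :=
  hπ s

theorem IsStarRep.isFormalAdjoint_self (hπ : IsStarRep π) {s : A} (hs : star s = s) :
    (repPMap π s).IsFormalAdjoint (repPMap π s) := by
  simpa only [hs] using hπ.isFormalAdjoint s

theorem norm_rep_resolvent_le (hπ : IsStarRep π) {s : A} (hs : star s = s) {μ : ℂ}
    (hspec : ∀ z ∈ spectrum ℂ s, z.im = 0) (hμ : μ.im ≠ 0) (u : D) :
    ‖((π (resolvent s μ) u : D) : H)‖ ≤ |μ.im|⁻¹ * ‖(u : H)‖ := by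
  rw [le_inv_mul_iff₀ (abs_pos.2 hμ)]
  have h := (hπ.isFormalAdjoint_self hs).abs_im_mul_norm_le μ (π (resolvent s μ) u)
  rwa [repPMap_apply, rep_apply_rep_resolvent_apply fun h => hμ (hspec μ h), sub_sub_cancel] at h

variable [CompleteSpace H]

theorem IsStarRep.isClosable (hπ : IsStarRep π) (hD : Dense (D : Set H)) (s : A) :
    (repPMap π s).IsClosable := by
  simpa only [star_star] using (hπ.isFormalAdjoint (star s)).isClosable hD

theorem mem_closure_graph_repPMap_iff (hπ : IsStarRep π) (hD : Dense (D : Set H)) {s : A}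
    {x y : H} : (x, y) ∈ (repPMap π s).closure.graph ↔ ∃ u : ℕ → D,
      Tendsto (fun n => (u n : H)) atTop (𝓝 x) ∧
        Tendsto (fun n => ((π s (u n) : D) : H)) atTop (𝓝 y) :=
  (hπ.isClosable hD s).mem_closure_graph_iff

section Resolvent

variable (hπ : IsStarRep π) (hD : Dense (D : Set H)) {s : A} (hs : star s = s)
  (hspec : ∀ z ∈ spectrum ℂ s, z.im = 0)
include hπ hD hs hspec

theorem repResolvent_apply {μ : ℂ} (hμ : μ.im ≠ 0) (u : D) :
    repResolvent π s μ u = π (resolvent s μ) u :=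
  repResolvent_apply_of_bound hD (norm_rep_resolvent_le hπ hs hspec hμ) u

theorem norm_repResolvent_le {μ : ℂ} (hμ : μ.im ≠ 0) (x : H) :
    ‖repResolvent π s μ x‖ ≤ |μ.im|⁻¹ * ‖x‖ :=
  norm_repResolvent_le_of_bound hD (norm_rep_resolvent_le hπ hs hspec hμ) x

theorem repResolvent_mem_closure_graph {μ : ℂ} (hμ : μ.im ≠ 0) (w : H) :
    (repResolvent π s μ w, μ • repResolvent π s μ w - w) ∈ (repPMap π s).closure.graph := by
  refine hD.induction (P := fun w =>
      (repResolvent π s μ w, μ • repResolvent π s μ w - w) ∈ (repPMap π s).closure.graph)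
    (fun u hu => LinearPMap.le_graph_of_le (repPMap π s).le_closure ?_)
    ((hπ.isClosable hD s).closure_isClosed.preimage (by fun_prop)) w
  rw [repResolvent_apply hπ hD hs hspec hμ ⟨u, hu⟩,
    ← rep_apply_rep_resolvent_apply fun h => hμ (hspec μ h)]
  exact (repPMap π s).mem_graph (π (resolvent s μ) ⟨u, hu⟩)

theorem repResolvent_smul_sub {μ : ℂ} (hμ : μ.im ≠ 0) {x y : H}
    (hxy : (x, y) ∈ (repPMap π s).closure.graph) : repResolvent π s μ (μ • x - y) = x := by
  have hgraph : ((repPMap π s).closure.graph : Set (H × H)) ⊆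
      {p | repResolvent π s μ (μ • p.1 - p.2) = p.1} := by
    rw [← (hπ.isClosable hD s).graph_closure_eq_closure_graph, Submodule.topologicalClosure_coe]
    have hinv : ∀ u : D, repResolvent π s μ (μ • (u : H) - π s u) = u := fun u => by
      rw [← rep_algebraMap_sub_apply, repResolvent_apply hπ hD hs hspec hμ,
        rep_resolvent_apply_rep_sub_apply fun h => hμ (hspec μ h)]
    refine closure_minimal (fun p hp => ?_) (isClosed_eq (by fun_prop) (by fun_prop))
    obtain ⟨u, rfl⟩ := ((repPMap π s).mem_graph_iff' (x := p)).1 hp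
    exact hinv u
  exact hgraph hxy

theorem smul_repResolvent_sub_self {μ : ℂ} (hμ : μ.im ≠ 0) (u : D) :
    μ • repResolvent π s μ u - u = repResolvent π s μ (π s u) := by
  have h : repResolvent π s μ (μ • (u : H) - π s u) = u := repResolvent_smul_sub hπ hD hs hspec hμ
    (LinearPMap.le_graph_of_le (repPMap π s).le_closure ((repPMap π s).mem_graph u))
  rw [map_sub, map_smul] at h
  nth_rewrite 2 [← h]
  rw [sub_sub_cancel]

theorem norm_smul_repResolvent_le (ν : ℝ) (x : H) :
    ‖((ν : ℂ) * Complex.I) • repResolvent π s ((ν : ℂ) * Complex.I) x‖ ≤ ‖x‖ := by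
  rcases eq_or_ne ν 0 with rfl | hν
  · simp
  have hR := norm_repResolvent_le hπ hD hs hspec (μ := (ν : ℂ) * Complex.I) (by simpa) x
  rw [norm_smul]
  calc ‖(ν : ℂ) * Complex.I‖ * ‖repResolvent π s ((ν : ℂ) * Complex.I) x‖
      ≤ |ν| * (|ν|⁻¹ * ‖x‖) := by simpa using mul_le_mul_of_nonneg_left hR (abs_nonneg ν)
    _ = ‖x‖ := by field_simp

theorem tendsto_smul_repResolvent (w : H) :
    Tendsto (fun ν : ℝ => ((ν : ℂ) * Complex.I) • repResolvent π s ((ν : ℂ) * Complex.I) w)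
      atTop (𝓝 w) := by
  set F : ℝ → H →L[ℂ] H := fun ν => ((ν : ℂ) * Complex.I) • repResolvent π s ((ν : ℂ) * Complex.I)
  have hequi : Equicontinuous fun ν x => F ν x :=
    (LipschitzWith.uniformEquicontinuous _ _ fun ν => AddMonoidHomClass.lipschitz_of_bound (F ν) 1
      fun x => (one_mul ‖x‖).symm ▸ norm_smul_repResolvent_le hπ hD hs hspec ν x).equicontinuous
  refine hD.induction (P := fun w => Tendsto (fun ν => F ν w) atTop (𝓝 w)) (fun v hv => ?_)
    (hequi.isClosed_setOfPred_tendsto continuous_id) w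
  set Tv : H := ((π s ⟨v, hv⟩ : D) : H)
  have hlim : Tendsto (fun ν : ℝ => |ν|⁻¹ * ‖Tv‖) atTop (𝓝 0) := by
    simpa using (tendsto_inv_atTop_zero.comp tendsto_abs_atTop_atTop).mul_const ‖Tv‖
  rw [tendsto_iff_norm_sub_tendsto_zero]
  refine squeeze_zero' (Eventually.of_forall fun _ => norm_nonneg _)
    ((eventually_ne_atTop 0).mono fun ν hν => ?_) hlim
  have hμ : ((ν : ℂ) * Complex.I).im ≠ 0 := by simpa
  simpa [F, smul_repResolvent_sub_self hπ hD hs hspec hμ ⟨v, hv⟩] using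
    norm_repResolvent_le hπ hD hs hspec hμ Tv

theorem exists_smul_sub_closure_repPMap_eq {μ : ℂ} (hμ : μ.im ≠ 0) (w : H) :
    ∃ x : (repPMap π s).closure.domain, μ • (x : H) - (repPMap π s).closure x = w := by
  have h := repResolvent_mem_closure_graph hπ hD hs hspec hμ w
  refine ⟨⟨_, LinearPMap.mem_domain_of_mem_graph h⟩, ?_⟩
  rw [← (LinearPMap.image_iff _).2 h, sub_sub_cancel]

theorem closure_repPMap_isSelfAdjoint : IsSelfAdjoint (repPMap π s).closure :=
  LinearPMap.isSelfAdjoint_of_surjective (dense_domain_closure_repPMap hD s)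
    ((hπ.isFormalAdjoint_self hs).closure (hπ.isClosable hD s) (hπ.isClosable hD s))
    (exists_smul_sub_closure_repPMap_eq hπ hD hs hspec (by simp))
    (exists_smul_sub_closure_repPMap_eq hπ hD hs hspec (by simp))

end Resolvent

end Representation

section Decomposition

variable {A : Type*} [CommRing A] [Algebra ℂ A] [StarRing A]
  {H : Type*} [NormedAddCommGroup H] [InnerProductSpace ℂ H] {D : Submodule ℂ H}
  {π : A →ₐ[ℂ] (D →ₗ[ℂ] D)} (hπ : IsStarRep π) {a b c : A} (hsb : star b = b)
  (hc : c = a + Complex.I • b)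
include hπ hsb hc

theorem norm_sq_rep_of_eq_add_I_smul (hsa : star a = a) (u : D) :
    ‖((π c u : D) : H)‖ ^ 2 = ‖((π a u : D) : H)‖ ^ 2 + ‖((π b u : D) : H)‖ ^ 2 := by
  have hab : star (a * b) = a * b := by rw [star_mul, hsa, hsb, mul_comm]
  have hreal : (⟪((π a u : D) : H), ((π b u : D) : H)⟫_ℂ).im = 0 := by
    rw [hπ a u (π b u), hsa, ← Module.End.mul_apply, ← map_mul, ← inner_conj_symm,
      Complex.conj_im, neg_eq_zero]
    exact (hπ.isFormalAdjoint_self hab).im_inner_self_eq_zero u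
  rw [rep_apply_of_eq_add_I_smul hc, @norm_add_sq ℂ, inner_smul_right, norm_smul]
  simp [hreal]

variable [CompleteSpace H] (hD : Dense (D : Set H))
include hD

theorem exists_of_mem_closure_graph_repPMap (hsa : star a = a) {x y : H}
    (h : (x, y) ∈ (repPMap π c).closure.graph) :
    ∃ ya yb, (x, ya) ∈ (repPMap π a).closure.graph ∧ (x, yb) ∈ (repPMap π b).closure.graph ∧
      y = ya + Complex.I • yb := by
  obtain ⟨u, hux, huy⟩ := (mem_closure_graph_repPMap_iff hπ hD).1 h
  have hlim : ∀ s, (∀ v : D, ‖((π s v : D) : H)‖ ≤ ‖((π c v : D) : H)‖) →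
      ∃ ys, Tendsto (fun n => ((π s (u n) : D) : H)) atTop (𝓝 ys) := fun s hs =>
    cauchySeq_tendsto_of_complete <| cauchySeq_comp_of_norm_le
      (D.subtype ∘ₗ π s).toAddMonoidHom (D.subtype ∘ₗ π c).toAddMonoidHom hs huy.cauchySeq
  have hnorm := norm_sq_rep_of_eq_add_I_smul hπ hsb hc hsa
  obtain ⟨ya, hya⟩ := hlim a fun v => (pow_le_pow_iff_left₀ (norm_nonneg _) (norm_nonneg _)
    two_ne_zero).1 (by rw [hnorm]; exact le_add_of_nonneg_right (sq_nonneg _))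
  obtain ⟨yb, hyb⟩ := hlim b fun v => (pow_le_pow_iff_left₀ (norm_nonneg _) (norm_nonneg _)
    two_ne_zero).1 (by rw [hnorm]; exact le_add_of_nonneg_left (sq_nonneg _))
  refine ⟨ya, yb, (mem_closure_graph_repPMap_iff hπ hD).2 ⟨u, hux, hya⟩,
    (mem_closure_graph_repPMap_iff hπ hD).2 ⟨u, hux, hyb⟩, tendsto_nhds_unique huy ?_⟩
  simpa only [rep_apply_of_eq_add_I_smul hc] using hya.add (hyb.const_smul Complex.I)

variable (hspec : ∀ z ∈ spectrum ℂ b, z.im = 0)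
include hspec

theorem repResolvent_mem_closure_graph_repPMap {μ : ℂ} (hμ : μ.im ≠ 0) {x ya yb : H}
    (hxa : (x, ya) ∈ (repPMap π a).closure.graph) (hxb : (x, yb) ∈ (repPMap π b).closure.graph) :
    (repResolvent π b μ x, repResolvent π b μ ya + Complex.I • repResolvent π b μ yb) ∈
      (repPMap π c).closure.graph := by
  set R := repResolvent π b μ
  have hRD : ∀ u : D, R u = π (resolvent b μ) u := repResolvent_apply hπ hD hsb hspec hμ
  have hyb : R yb = μ • R x - x := by
    have h : R (μ • x - yb) = x := repResolvent_smul_sub hπ hD hsb hspec hμ hxb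
    rw [map_sub, map_smul] at h
    calc R yb = μ • R x - (μ • R x - R yb) := (sub_sub_cancel _ _).symm
      _ = μ • R x - x := by rw [h]
  obtain ⟨u, hux, huy⟩ := (mem_closure_graph_repPMap_iff hπ hD).1 hxa
  have key : ∀ n, ((π c (π (resolvent b μ) (u n)) : D) : H) =
      R (π a (u n)) + Complex.I • (μ • R (u n) - u n) := fun n => by
    rw [rep_apply_of_eq_add_I_smul hc, rep_apply_rep_resolvent_apply fun h => hμ (hspec μ h),
      hRD, hRD, ← Module.End.mul_apply, ← map_mul, mul_comm, map_mul, Module.End.mul_apply]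
  have hlim := ((R.continuous.tendsto _).comp huy).add
    ((((R.continuous.tendsto _).comp hux).const_smul μ |>.sub hux).const_smul Complex.I)
  rw [← hyb] at hlim
  rw [mem_closure_graph_repPMap_iff hπ hD]
  refine ⟨fun n => π (resolvent b μ) (u n), ?_, hlim.congr fun n => (key n).symm⟩
  simpa only [Function.comp_def, hRD] using (R.continuous.tendsto x).comp hux

theorem mem_closure_graph_repPMap_of_mem {x ya yb : H}
    (hxa : (x, ya) ∈ (repPMap π a).closure.graph) (hxb : (x, yb) ∈ (repPMap π b).closure.graph) :
    (x, ya + Complex.I • yb) ∈ (repPMap π c).closure.graph := by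
  set R := fun ν : ℝ => repResolvent π b ((ν : ℂ) * Complex.I)
  have hlim : Tendsto (fun ν : ℝ => ((ν : ℂ) * Complex.I) • (R ν x, R ν ya + Complex.I • R ν yb))
      atTop (𝓝 (x, ya + Complex.I • yb)) := by
    simp only [Prod.smul_mk, smul_add, smul_comm _ Complex.I]
    exact (tendsto_smul_repResolvent hπ hD hsb hspec x).prodMk_nhds
      ((tendsto_smul_repResolvent hπ hD hsb hspec ya).add
        ((tendsto_smul_repResolvent hπ hD hsb hspec yb).const_smul Complex.I))
  refine (hπ.isClosable hD c).closure_isClosed.mem_of_tendsto hlim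
    ((eventually_ne_atTop 0).mono fun ν hν => Submodule.smul_mem _ _ ?_)
  exact repResolvent_mem_closure_graph_repPMap hπ hsb hc hD hspec (by simpa using hν) hxa hxb

theorem domain_closure_repPMap_eq_inf (hsa : star a = a) :
    (repPMap π c).closure.domain =
      (repPMap π a).closure.domain ⊓ (repPMap π b).closure.domain := by
  ext x
  rw [Submodule.mem_inf]
  constructor
  · intro hx
    obtain ⟨ya, yb, hxa, hxb, -⟩ := exists_of_mem_closure_graph_repPMap hπ hsb hc hD hsa
      ((repPMap π c).closure.mem_graph ⟨x, hx⟩)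
    exact ⟨LinearPMap.mem_domain_of_mem_graph hxa, LinearPMap.mem_domain_of_mem_graph hxb⟩
  · rintro ⟨hxa, hxb⟩
    exact LinearPMap.mem_domain_of_mem_graph (mem_closure_graph_repPMap_of_mem hπ hsb hc hD hspec
      ((repPMap π a).closure.mem_graph ⟨x, hxa⟩) ((repPMap π b).closure.mem_graph ⟨x, hxb⟩))

theorem closure_repPMap_apply (x : H) (hxc : x ∈ (repPMap π c).closure.domain)
    (hxa : x ∈ (repPMap π a).closure.domain) (hxb : x ∈ (repPMap π b).closure.domain) :
    (repPMap π c).closure ⟨x, hxc⟩ =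
      (repPMap π a).closure ⟨x, hxa⟩ + Complex.I • (repPMap π b).closure ⟨x, hxb⟩ :=
  ((LinearPMap.image_iff hxc).2 (mem_closure_graph_repPMap_of_mem hπ hsb hc hD hspec
    ((repPMap π a).closure.mem_graph ⟨x, hxa⟩) ((repPMap π b).closure.mem_graph ⟨x, hxb⟩))).symm

end Decomposition

open ComplexStarModule in
theorem star_eq_and_eq_add_I_smul {A : Type*} [AddCommGroup A] [Module ℂ A] [StarAddMonoid A]
    [StarModule ℂ A] {a b c : A} (ha : a = (2 : ℂ)⁻¹ • (c + star c))
    (hb : b = (2 * Complex.I : ℂ)⁻¹ • (c - star c)) :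
    star a = a ∧ star b = b ∧ c = a + Complex.I • b := by
  obtain rfl : a = ℜ c := by rw [ha, realPart_apply_coe, ← Complex.coe_smul]; norm_num
  obtain rfl : b = ℑ c := by
    rw [hb, imaginaryPart_apply_coe, ← Complex.coe_smul, smul_smul, mul_inv, Complex.inv_I]
    push_cast; ring_nf
  exact ⟨(ℜ c).2, (ℑ c).2, (realPart_add_I_smul_imaginaryPart c).symm⟩

/-- Let `A` be a Hermitian commutative unital complex *-algebra, `π` a
representation of `A` on a dense subspace `D` of a Hilbert space `H`, and `c ∈ A` with real
and imaginary parts `a = (c + star c)/2`, `b = (c - star c)/(2i)`.  Then `T_a` and `T_b` are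
essentially self-adjoint, `T_c` is closable, and
`closure T_c = closure T_a + i • closure T_b`. -/
theorem stmt4 {A : Type*} [CommRing A] [Algebra ℂ A] [StarRing A] [StarModule ℂ A]
    (hHerm : ∀ a : A, star a = a → ∀ z ∈ spectrum ℂ a, z.im = 0)
    {H : Type*} [NormedAddCommGroup H] [InnerProductSpace ℂ H] [CompleteSpace H]
    (D : Submodule ℂ H) (hD : Dense (D : Set H))
    (π : A →ₐ[ℂ] (D →ₗ[ℂ] D))
    (hπ : ∀ (d : A) (x y : D),
      ⟪((π d x : D) : H), (y : H)⟫_ℂ = ⟪(x : H), ((π (star d) y : D) : H)⟫_ℂ)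
    (c a b : A)
    (ha : a = ((2 : ℂ)⁻¹) • (c + star c))
    (hb : b = ((2 * Complex.I : ℂ)⁻¹) • (c - star c))
    (Ta Tb Tc : H →ₗ.[ℂ] H)
    (hTa : Ta = ⟨D, D.subtype.comp (π a)⟩)
    (hTb : Tb = ⟨D, D.subtype.comp (π b)⟩)
    (hTc : Tc = ⟨D, D.subtype.comp (π c)⟩) :
    (star a = a ∧ star b = b) ∧
    (Ta.IsClosable ∧ IsSelfAdjoint Ta.closure) ∧
    (Tb.IsClosable ∧ IsSelfAdjoint Tb.closure) ∧
    Tc.IsClosable ∧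
    Tc.closure.domain = Ta.closure.domain ⊓ Tb.closure.domain ∧
    ∀ (x : H) (hxc : x ∈ Tc.closure.domain) (hxa : x ∈ Ta.closure.domain)
      (hxb : x ∈ Tb.closure.domain),
      Tc.closure ⟨x, hxc⟩ = Ta.closure ⟨x, hxa⟩ + Complex.I • Tb.closure ⟨x, hxb⟩ := by
  obtain ⟨hsa, hsb, hc⟩ := star_eq_and_eq_add_I_smul ha hb
  obtain rfl : Ta = repPMap π a := hTa
  obtain rfl : Tb = repPMap π b := hTb
  obtain rfl : Tc = repPMap π c := hTc
  have hπ : IsStarRep π := hπ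
  exact ⟨⟨hsa, hsb⟩, ⟨hπ.isClosable hD a, closure_repPMap_isSelfAdjoint hπ hD hsa (hHerm a hsa)⟩,
    ⟨hπ.isClosable hD b, closure_repPMap_isSelfAdjoint hπ hD hsb (hHerm b hsb)⟩,
    hπ.isClosable hD c, domain_closure_repPMap_eq_inf hπ hsb hc hD (hHerm b hsb) hsa,
    closure_repPMap_apply hπ hsb hc hD (hHerm b hsb)⟩
end

section
/- Let A be a Hermitian commutative unital complex *-algebra and let S be the ℂ-linear span of the unitary group of A. Then every element of A is a fraction of elements of S: for every a ∈ A there exist b, c ∈ S with c invertible in A and c * a = b (equivalently a = c⁻¹ * b). -/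
/-!
Write `a = ℜ a + i ℑ a`. For selfadjoint `x`, the Hermitian hypothesis makes `w = x + i` invertible,
and its Cayley transform `u = w* w⁻¹ = (x - i)(x + i)⁻¹` is unitary. From `(1 - u) w = 2i` and
`(1 + u) w = 2x` one reads off `(1 - u) x = i (1 + u)` with `1 - u` invertible. Fractions over the
algebra spanned by the unitaries form a subalgebra, so `a` is a fraction as well.
-/

open Complex
open scoped ComplexStarModule

lemma Submodule.span_submonoid_eq_adjoin {R A : Type*} [CommSemiring R] [Semiring A]
    [Algebra R A] (M : Submonoid A) :
    span R (M : Set A) = Subalgebra.toSubmodule (Algebra.adjoin R (M : Set A)) := by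
  rw [Algebra.adjoin_eq_span, Submonoid.closure_eq]

def Subalgebra.fractions {R A : Type*} [CommSemiring R] [CommSemiring A] [Algebra R A]
    (B : Subalgebra R A) : Subalgebra R A where
  carrier := {a | ∃ c ∈ B, IsUnit c ∧ c * a ∈ B}
  mul_mem' := by
    rintro a a' ⟨c, hc, hcu, hca⟩ ⟨c', hc', hcu', hca'⟩
    refine ⟨c * c', mul_mem hc hc', hcu.mul hcu', ?_⟩
    rw [mul_mul_mul_comm]
    exact mul_mem hca hca'
  add_mem' := by
    rintro a a' ⟨c, hc, hcu, hca⟩ ⟨c', hc', hcu', hca'⟩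
    refine ⟨c * c', mul_mem hc hc', hcu.mul hcu', ?_⟩
    rw [show c * c' * (a + a') = c' * (c * a) + c * (c' * a') by ring]
    exact add_mem (mul_mem hc' hca) (mul_mem hc hca')
  algebraMap_mem' r := ⟨1, one_mem B, isUnit_one, by rw [one_mul]; exact B.algebraMap_mem r⟩

lemma star_mul_inv_mem_unitary {A : Type*} [CommMonoid A] [StarMul A] (w : Aˣ) :
    star (w : A) * ↑w⁻¹ ∈ unitary A := by
  rw [Unitary.mem_iff_star_mul_self, star_mul, star_star, mul_mul_mul_comm, ← star_mul,
    Units.mul_inv, star_one, one_mul]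

lemma isUnit_add_algebraMap_I {A : Type*} [Ring A] [Algebra ℂ A] {x : A}
    (hx : ∀ z ∈ spectrum ℂ x, z.im = 0) : IsUnit (x + algebraMap ℂ A I) := by
  have hI : -I ∉ spectrum ℂ x := fun h => by simpa using hx _ h
  rw [spectrum.notMem_iff, map_neg, ← neg_add', IsUnit.neg_iff, add_comm] at hI
  exact hI

lemma Subalgebra.mem_fractions_adjoin_unitary {A : Type*} [CommRing A] [StarRing A]
    [Algebra ℂ A] [StarModule ℂ A] {x : A} (hx : IsSelfAdjoint x)
    (hunit : IsUnit (x + algebraMap ℂ A I)) :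
    x ∈ (Algebra.adjoin ℂ (unitary A : Set A)).fractions := by
  obtain ⟨w, hw⟩ := hunit
  set J := algebraMap ℂ A I
  have hstar : star (w : A) = x - J := by
    rw [hw, star_add, hx.star_eq, ← algebraMap_star_comm, Complex.star_def, conj_I, map_neg,
      sub_eq_add_neg]
  set u := star (w : A) * ↑w⁻¹
  have hu : u ∈ Algebra.adjoin ℂ (unitary A : Set A) :=
    Algebra.subset_adjoin (star_mul_inv_mem_unitary w)
  have huw : u * w = star (w : A) := by rw [mul_assoc, Units.inv_mul, mul_one]
  have hcw : (1 - u) * w = algebraMap ℂ A (2 * I) := by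
    rw [sub_mul, one_mul, huw, hstar, hw, map_mul, map_ofNat]
    ring
  have hc : IsUnit (1 - u) :=
    isUnit_of_mul_isUnit_left (hcw ▸ (isUnit_iff_ne_zero.mpr (by simp)).map _)
  refine ⟨1 - u, sub_mem (one_mem _) hu, hc, ?_⟩
  have hcx : (1 - u) * x = J * (1 + u) := by
    rw [← Units.mul_left_inj w]
    linear_combination (-x - J) * huw + (x - J) * hw + (-x - J) * hstar
  rw [hcx]
  exact mul_mem (Subalgebra.algebraMap_mem _ I) (add_mem (one_mem _) hu)

/-- In a Hermitian commutative unital complex *-algebra, every element is a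
fraction of elements of the linear span `S` of the unitary group: `a = c⁻¹ * b` with
`b, c ∈ S` and `c` invertible. -/
theorem stmt15 {A : Type*} [CommRing A] [Algebra ℂ A] [StarRing A] [StarModule ℂ A]
    (hHerm : ∀ a : A, star a = a → ∀ z ∈ spectrum ℂ a, z.im = 0)
    (a : A) :
    ∃ b c : A, b ∈ Submodule.span ℂ ((unitary A : Set A)) ∧
      c ∈ Submodule.span ℂ ((unitary A : Set A)) ∧
      IsUnit c ∧ c * a = b := by
  set B := Algebra.adjoin ℂ (unitary A : Set A)
  have hsa : ∀ x : A, IsSelfAdjoint x → x ∈ B.fractions := fun x hx =>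
    Subalgebra.mem_fractions_adjoin_unitary hx (isUnit_add_algebraMap_I (hHerm x hx))
  have ha : a ∈ B.fractions := by
    rw [← realPart_add_I_smul_imaginaryPart a]
    exact add_mem (hsa _ (ℜ a).2) (Subalgebra.smul_mem _ (hsa _ (ℑ a).2) I)
  obtain ⟨c, hcB, hc, hcaB⟩ := ha
  rw [Submodule.span_submonoid_eq_adjoin (unitary A)]
  exact ⟨c * a, c, hcaB, hcB, hc, rfl⟩
end
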